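/- arXiv:2111.13541 — 5 statements merged into one kernel-verified Lean document; each statement's English description precedes it below -/
import Mathlib

section
/- Let n ≥ 4, let E ⊆ ⋀²(ℝⁿ) be a prime subspace, let λ ∈ ℝⁿ be nonzero and α ∈ ⋀²(ℝⁿ). Identify ℝⁿ with ℝⁿ×{0} ⊆ ℝ^{n+1} and let e be the last standard basis vector of ℝ^{n+1}, so ⋀²(ℝⁿ) ⊆ ⋀²(ℝ^{n+1}). Then the subspace E ⊕ V_{λ,α} ⊆ ⋀²(ℝ^{n+1}), where V_{λ,α} = span{λ∧e + α}, is prime if and only if α ∉ L(λ) := E + λ∧ℝⁿ. -/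
set_option synthInstance.maxHeartbeats 1000000
set_option maxHeartbeats 1000000
open ExteriorAlgebra

/-- The inclusion `ℝⁿ ↪ ℝ^{n+1}`, `x ↦ (x, 0)`. -/
noncomputable def incl (n : ℕ) : (Fin n → ℝ) →ₗ[ℝ] (Fin (n + 1) → ℝ) where
  toFun x := fun j => if h : (j : ℕ) < n then x ⟨j, h⟩ else 0
  map_add' x y := by funext j; by_cases h : (j : ℕ) < n <;> simp [h]
  map_smul' c x := by funext j; by_cases h : (j : ℕ) < n <;> simp [h]

/-- The last standard basis vector `e` of `ℝ^{n+1}`, inside the exterior algebra. -/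
noncomputable def elast (n : ℕ) : ExteriorAlgebra ℝ (Fin (n + 1) → ℝ) :=
  ι ℝ (Pi.single (Fin.last n) (1 : ℝ))

/-- `V_{λ,α} = span{λ∧e + α} ⊆ ⋀²(ℝ^{n+1})` for `λ ∈ ℝⁿ`, `α ∈ ⋀²(ℝⁿ)`. -/
noncomputable def Vspan (n : ℕ) (lam : Fin n → ℝ) (α : ExteriorAlgebra ℝ (Fin n → ℝ)) :
    Submodule ℝ (ExteriorAlgebra ℝ (Fin (n + 1) → ℝ)) :=
  Submodule.span ℝ {ι ℝ (incl n lam) * elast n + ExteriorAlgebra.map (incl n) α}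

/-- A subspace of the exterior algebra is prime if each of its nonzero elements has
injective wedge multiplication by vectors. -/
def IsPrimeSub {V : Type*} [AddCommGroup V] [Module ℝ V]
    (E : Submodule ℝ (ExteriorAlgebra ℝ V)) : Prop :=
  ∀ x ∈ E, x ≠ 0 → ∀ μ : V, μ ≠ 0 → x * ι ℝ μ ≠ 0

/-- `L(λ) = E + λ∧ℝⁿ ⊆ ⋀²(ℝⁿ)`. -/
noncomputable def Lsub (n : ℕ) (E : Submodule ℝ (ExteriorAlgebra ℝ (Fin n → ℝ)))
    (lam : Fin n → ℝ) : Submodule ℝ (ExteriorAlgebra ℝ (Fin n → ℝ)) :=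
  E ⊔ Submodule.span ℝ {z | ∃ v : Fin n → ℝ, z = ι ℝ lam * ι ℝ v}

/-! ### Auxiliary lemmas -/

/-- Contraction on the right by a dual element, specialized to the exterior algebra. -/
noncomputable abbrev cR {m : ℕ} (x : ExteriorAlgebra ℝ (Fin m → ℝ))
    (f : Module.Dual ℝ (Fin m → ℝ)) : ExteriorAlgebra ℝ (Fin m → ℝ) :=
  CliffordAlgebra.contractRight (Q := (0 : QuadraticForm ℝ (Fin m → ℝ))) x f

lemma cR_mul_ι {m : ℕ} (x : ExteriorAlgebra ℝ (Fin m → ℝ)) (f : Module.Dual ℝ (Fin m → ℝ))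
    (a : Fin m → ℝ) : cR (x * ι ℝ a) f = f a • x - cR x f * ι ℝ a :=
  CliffordAlgebra.contractRight_mul_ι (Q := (0 : QuadraticForm ℝ (Fin m → ℝ))) (d := f) a x

lemma cR_ι {m : ℕ} (a : Fin m → ℝ) (f : Module.Dual ℝ (Fin m → ℝ)) :
    cR (ι ℝ a) f = algebraMap ℝ _ (f a) :=
  CliffordAlgebra.contractRight_ι (Q := (0 : QuadraticForm ℝ (Fin m → ℝ))) f a

lemma cR_zero {m : ℕ} (f : Module.Dual ℝ (Fin m → ℝ)) : cR 0 f = 0 := by simp [cR]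

lemma exists_dual {m : ℕ} {l : Fin m → ℝ} (hl : l ≠ 0) :
    ∃ f : Module.Dual ℝ (Fin m → ℝ), f l = 1 := by
  obtain ⟨i, hi⟩ := Function.ne_iff.mp hl
  refine ⟨(l i)⁻¹ • LinearMap.proj i, ?_⟩
  simp only [LinearMap.smul_apply, LinearMap.proj_apply, smul_eq_mul]
  exact inv_mul_cancel₀ (by simpa using hi)

/-- If `ι a * ι b = 0` and `a ≠ 0` then `b` is a multiple of `a`. -/
lemma wedge_dep {m : ℕ} {a b : Fin m → ℝ} (ha : a ≠ 0) (h : ι ℝ a * ι ℝ b = 0) :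
    ∃ c : ℝ, b = c • a := by
  obtain ⟨f, hf⟩ := exists_dual ha
  have hc := congrArg (fun y => cR y f) h
  simp only [cR_zero] at hc
  rw [cR_mul_ι, cR_ι, hf, map_one, one_mul, sub_eq_zero] at hc
  exact ⟨f b, (ι_inj ℝ b (f b • a)).mp (by rw [map_smul, hc])⟩

/-- Cartan's lemma for 2-forms: `β ∧ l = 0` implies `β = l ∧ u`. -/
lemma cartan {m : ℕ} {β : ExteriorAlgebra ℝ (Fin m → ℝ)} (hβ : β ∈ ⋀[ℝ]^2 (Fin m → ℝ))
    {l : Fin m → ℝ} (hl : l ≠ 0) (h : β * ι ℝ l = 0) :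
    ∃ u : Fin m → ℝ, β = ι ℝ l * ι ℝ u := by
  obtain ⟨f, hf⟩ := exists_dual hl
  have hβ' : β ∈ LinearMap.range (ι ℝ : (Fin m → ℝ) →ₗ[ℝ] _) *
      LinearMap.range (ι ℝ : (Fin m → ℝ) →ₗ[ℝ] _) := by rwa [← pow_two]
  have hrange : cR β f ∈ LinearMap.range (ι ℝ : (Fin m → ℝ) →ₗ[ℝ] _) := by
    refine Submodule.mul_induction_on hβ' ?_ ?_
    · rintro x ⟨u, rfl⟩ y ⟨v, rfl⟩
      rw [cR_mul_ι, cR_ι, ← Algebra.smul_def]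
      exact Submodule.sub_mem _ (Submodule.smul_mem _ _ ⟨u, rfl⟩)
        (Submodule.smul_mem _ _ ⟨v, rfl⟩)
    · intro x y hx hy
      have : cR (x + y) f = cR x f + cR y f := by simp [cR]
      rw [this]; exact Submodule.add_mem _ hx hy
  obtain ⟨u', hu'⟩ := hrange
  have hc := congrArg (fun y => cR y f) h
  simp only [cR_zero] at hc
  rw [cR_mul_ι, hf, one_smul, sub_eq_zero, ← hu'] at hc
  refine ⟨-u', ?_⟩
  rw [map_neg, mul_neg, hc]
  have hsw := ι_add_mul_swap (R := ℝ) u' l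
  rw [eq_neg_iff_add_eq_zero]
  exact hsw

/-- The projection `ℝ^{n+1} → ℝⁿ` dropping the last coordinate. -/
noncomputable def projn (n : ℕ) : (Fin (n + 1) → ℝ) →ₗ[ℝ] (Fin n → ℝ) :=
  LinearMap.funLeft ℝ ℝ Fin.castSucc

lemma projn_incl (n : ℕ) : (projn n).comp (incl n) = LinearMap.id := by
  ext x i
  simp [projn, incl, LinearMap.funLeft_apply, Fin.is_lt]

lemma PJ (n : ℕ) (a : ExteriorAlgebra ℝ (Fin n → ℝ)) :
    ExteriorAlgebra.map (projn n) (ExteriorAlgebra.map (incl n) a) = a := by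
  rw [← AlgHom.comp_apply, map_comp_map, projn_incl, map_id, AlgHom.id_apply]

lemma P_elast (n : ℕ) : ExteriorAlgebra.map (projn n) (elast n) = 0 := by
  rw [elast, map_apply_ι]
  convert LinearMap.map_zero (ι ℝ) using 2
  funext i
  exact Pi.single_eq_of_ne (Fin.ne_last_of_lt (Fin.castSucc_lt_last i)) 1

/-- The last-coordinate functional. -/
noncomputable def flast (n : ℕ) : Module.Dual ℝ (Fin (n + 1) → ℝ) := LinearMap.proj (Fin.last n)

lemma flast_single (n : ℕ) : flast n (Pi.single (Fin.last n) (1 : ℝ)) = 1 := by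
  simp [flast]

/-- The key splitting lemma: the decomposition `J a + J b ∧ e` is unique. -/
lemma split (n : ℕ) (a b : ExteriorAlgebra ℝ (Fin n → ℝ))
    (h : ExteriorAlgebra.map (incl n) a + ExteriorAlgebra.map (incl n) b * elast n = 0) :
    a = 0 ∧ b = 0 := by
  have ha : a = 0 := by
    have h2 := congrArg (ExteriorAlgebra.map (projn n)) h
    rw [map_add, map_mul, PJ, P_elast, mul_zero, add_zero, map_zero] at h2
    exact h2
  rw [ha, map_zero, zero_add] at h
  refine ⟨ha, ?_⟩
  have hc := congrArg (fun y => cR y (flast n)) h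
  simp only [cR_zero] at hc
  rw [show elast n = ι ℝ (Pi.single (Fin.last n) (1:ℝ)) from rfl, cR_mul_ι, flast_single,
    one_smul, sub_eq_zero] at hc
  have h3 := congrArg (ExteriorAlgebra.map (projn n)) hc
  rw [PJ, map_mul, map_apply_ι] at h3
  rw [h3]
  have : projn n (Pi.single (Fin.last n) (1:ℝ)) = 0 := by
    funext i
    exact Pi.single_eq_of_ne (Fin.ne_last_of_lt (Fin.castSucc_lt_last i)) 1
  rw [this, map_zero, mul_zero]

/-- Expansion of the product of two elements in split form. -/
lemma mulsplit (n : ℕ) (a b : ExteriorAlgebra ℝ (Fin n → ℝ)) (w : Fin n → ℝ) (s : ℝ) :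
    (ExteriorAlgebra.map (incl n) a + ExteriorAlgebra.map (incl n) b * elast n) *
      (ExteriorAlgebra.map (incl n) (ι ℝ w) + s • elast n) =
    ExteriorAlgebra.map (incl n) (a * ι ℝ w) +
      ExteriorAlgebra.map (incl n) (s • a - b * ι ℝ w) * elast n := by
  set J := ExteriorAlgebra.map (incl n) with hJ
  have e_sq : elast n * elast n = 0 := ι_sq_zero _
  have ew : elast n * J (ι ℝ w) = -(J (ι ℝ w) * elast n) := by
    rw [hJ, map_apply_ι, elast]
    have := ι_add_mul_swap (R := ℝ) (Pi.single (Fin.last n) (1:ℝ)) (incl n w)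
    rw [eq_neg_iff_add_eq_zero]
    exact this
  rw [add_mul, mul_add, mul_add, map_sub, map_smul, map_mul, map_mul, sub_mul, smul_mul_assoc]
  rw [mul_smul_comm, mul_smul_comm, mul_assoc (J b), ew, mul_assoc (J b), e_sq, mul_zero,
    smul_zero, add_zero, mul_neg, ← mul_assoc]
  abel

/-- Decomposition of a vector of `ℝ^{n+1}`. -/
lemma mu_decomp (n : ℕ) (μ : Fin (n + 1) → ℝ) :
    μ = incl n (fun i => μ i.castSucc) +
      μ (Fin.last n) • (Pi.single (Fin.last n) (1 : ℝ) : Fin (n + 1) → ℝ) := by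
  funext j
  by_cases h : (j : ℕ) < n
  · have hne : j ≠ Fin.last n := by
      intro he
      rw [he, Fin.val_last] at h
      exact lt_irrefl _ h
    simp only [Pi.add_apply, Pi.smul_apply, Pi.single_eq_of_ne hne, smul_eq_mul, mul_zero,
      add_zero, incl, LinearMap.coe_mk, AddHom.coe_mk, dif_pos h]
    congr 1
  · have hj : j = Fin.last n := by
      apply Fin.ext
      have := j.isLt
      simp only [Fin.val_last]
      omega
    subst hj
    simp only [Pi.add_apply, Pi.smul_apply, incl, LinearMap.coe_mk, AddHom.coe_mk, dif_neg h,
      Pi.single_eq_same, smul_eq_mul, mul_one, zero_add]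

/-- for a prime subspace `E ⊆ ⋀²(ℝⁿ)`, nonzero `λ ∈ ℝⁿ` and `α ∈ ⋀²(ℝⁿ)`,
the subspace `E ⊕ V_{λ,α} ⊆ ⋀²(ℝ^{n+1})` is prime iff `α ∉ L(λ) = E + λ∧ℝⁿ`. -/
theorem stmt_5 (n : ℕ) (hn : 4 ≤ n)
    (E : Submodule ℝ (ExteriorAlgebra ℝ (Fin n → ℝ)))
    (hE : E ≤ ⋀[ℝ]^2 (Fin n → ℝ)) (hEprime : IsPrimeSub E)
    (lam : Fin n → ℝ) (hlam : lam ≠ 0)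
    (α : ExteriorAlgebra ℝ (Fin n → ℝ)) (hα : α ∈ ⋀[ℝ]^2 (Fin n → ℝ)) :
    IsPrimeSub (E.map (ExteriorAlgebra.map (incl n)).toLinearMap ⊔ Vspan n lam α) ↔
      α ∉ Lsub n E lam := by
  constructor
  · -- prime → α ∉ L
    intro hP hmem
    rw [Lsub, Submodule.mem_sup] at hmem
    obtain ⟨ε, hε, z, hz, hεz⟩ := hmem
    have hz' : ∃ v, z = ι ℝ lam * ι ℝ v := by
      have hle : Submodule.span ℝ {z | ∃ v : Fin n → ℝ, z = ι ℝ lam * ι ℝ v} ≤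
          LinearMap.range ((LinearMap.mulLeft ℝ (ι ℝ lam)).comp (ι (M := Fin n → ℝ) ℝ)) := by
        rw [Submodule.span_le]
        rintro y ⟨v, rfl⟩
        exact ⟨v, rfl⟩
      obtain ⟨v, hv⟩ := hle hz
      exact ⟨v, hv.symm⟩
    obtain ⟨v, rfl⟩ := hz'
    set μ : Fin (n + 1) → ℝ := (Pi.single (Fin.last n) (1 : ℝ) : Fin (n + 1) → ℝ) + incl n v
      with hμ
    have hμne : μ ≠ 0 := by
      intro h0
      have h1 := congrFun h0 (Fin.last n)
      simp only [hμ, Pi.add_apply, Pi.single_eq_same, Pi.zero_apply, incl, LinearMap.coe_mk,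
        AddHom.coe_mk, dif_neg (lt_irrefl n)] at h1
      norm_num at h1
    set x := (ι ℝ (incl n lam) * elast n + ExteriorAlgebra.map (incl n) α)
      - ExteriorAlgebra.map (incl n) ε with hx
    have hxmem : x ∈ E.map (ExteriorAlgebra.map (incl n)).toLinearMap ⊔ Vspan n lam α :=
      Submodule.sub_mem _ (Submodule.mem_sup_right (Submodule.subset_span rfl))
        (Submodule.mem_sup_left ⟨ε, hε, rfl⟩)
    have hxform : x = ExteriorAlgebra.map (incl n) (ι ℝ lam * ι ℝ v) +
        ExteriorAlgebra.map (incl n) (ι ℝ lam) * elast n := by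
      rw [hx, ← hεz]
      simp only [map_add, map_mul, map_apply_ι]
      abel
    have hxne : x ≠ 0 := by
      intro h0
      rw [hxform] at h0
      obtain ⟨-, h2⟩ := split n _ _ h0
      exact hlam ((ι_eq_zero_iff lam).mp h2)
    have hιμ : ι ℝ μ = elast n + ι ℝ (incl n v) := by
      rw [hμ, map_add, elast]
    have hxval : x = ι ℝ (incl n lam) * ι ℝ μ := by
      rw [hxform]
      simp only [map_mul, map_apply_ι]
      rw [hιμ, mul_add]
      abel
    refine hP x hxmem hxne μ hμne ?_
    rw [hxval, mul_assoc, ι_sq_zero, mul_zero]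
  · -- α ∉ L → prime
    intro hL x hx hxne μ hμne hcontra
    rw [Submodule.mem_sup] at hx
    obtain ⟨y, hy, z, hz, hyz⟩ := hx
    rw [Submodule.mem_map] at hy
    obtain ⟨ε, hεE, hεy⟩ := hy
    rw [AlgHom.toLinearMap_apply] at hεy
    rw [Vspan, Submodule.mem_span_singleton] at hz
    obtain ⟨t, hzt⟩ := hz
    set w : Fin n → ℝ := fun i => μ i.castSucc with hw
    set s : ℝ := μ (Fin.last n) with hs
    have hμdec : μ = incl n w + s • (Pi.single (Fin.last n) (1 : ℝ) : Fin (n + 1) → ℝ) :=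
      mu_decomp n μ
    have hιμ : ι ℝ μ = ExteriorAlgebra.map (incl n) (ι ℝ w) + s • elast n := by
      rw [map_apply_ι, elast]
      conv_lhs => rw [hμdec]
      rw [map_add, map_smul]
    set β := ε + t • α with hβ
    have hxform : x = ExteriorAlgebra.map (incl n) β +
        ExteriorAlgebra.map (incl n) (t • ι ℝ lam) * elast n := by
      rw [← hyz, ← hεy, ← hzt, hβ, smul_add, map_add, map_smul, map_smul, map_apply_ι,
        smul_mul_assoc]
      abel
    have hprod : x * ι ℝ μ = ExteriorAlgebra.map (incl n) (β * ι ℝ w) +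
        ExteriorAlgebra.map (incl n) (s • β - (t • ι ℝ lam) * ι ℝ w) * elast n := by
      rw [hxform, hιμ]
      exact mulsplit n β (t • ι ℝ lam) w s
    rw [hprod] at hcontra
    obtain ⟨h1, h2⟩ := split n _ _ hcontra
    rw [sub_eq_zero, smul_mul_assoc] at h2
    by_cases ht : t = 0
    · have hβε : β = ε := by rw [hβ, ht, zero_smul, add_zero]
      have hεne : ε ≠ 0 := by
        intro h0
        apply hxne
        rw [hxform, hβε, h0, ht]
        simp
      have hs0 : s = 0 := by
        rw [ht, zero_smul, smul_eq_zero] at h2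
        rcases h2 with h | h
        · exact h
        · exact absurd (hβε ▸ h) hεne
      have hwne : w ≠ 0 := by
        intro h0
        apply hμne
        rw [hμdec, h0, hs0, map_zero, zero_smul, add_zero]
      exact hEprime ε hεE hεne w hwne (hβε ▸ h1)
    · apply hL
      have hβmem : β ∈ ⋀[ℝ]^2 (Fin n → ℝ) :=
        Submodule.add_mem _ (hE hεE) (Submodule.smul_mem _ _ hα)
      have hαval : α = t⁻¹ • β - t⁻¹ • ε := by
        rw [hβ, smul_add, smul_smul, inv_mul_cancel₀ ht, one_smul, add_sub_cancel_left]
      by_cases hs0 : s = 0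
      · rw [hs0, zero_smul] at h2
        have hlw : ι ℝ lam * ι ℝ w = 0 := by
          rcases smul_eq_zero.mp h2.symm with h | h
          · exact absurd h ht
          · exact h
        have hwne : w ≠ 0 := by
          intro h0
          apply hμne
          rw [hμdec, h0, hs0, map_zero, zero_smul, add_zero]
        obtain ⟨c, hc⟩ := wedge_dep hlam hlw
        have hcne : c ≠ 0 := by
          intro h0
          exact hwne (by rw [hc, h0, zero_smul])
        have hβl : β * ι ℝ lam = 0 := by
          have h1' := h1
          rw [hc, map_smul, mul_smul_comm] at h1'
          rcases smul_eq_zero.mp h1' with h | h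
          · exact absurd h hcne
          · exact h
        obtain ⟨u, hu⟩ := cartan hβmem hlam hβl
        rw [Lsub, hαval, hu]
        exact Submodule.sub_mem _
          (Submodule.mem_sup_right (Submodule.smul_mem _ _ (Submodule.subset_span ⟨u, rfl⟩)))
          (Submodule.mem_sup_left (Submodule.smul_mem _ _ hεE))
      · have hβval : β = ι ℝ lam * ι ℝ ((s⁻¹ * t) • w) := by
          calc β = s⁻¹ • (s • β) := by rw [smul_smul, inv_mul_cancel₀ hs0, one_smul]
            _ = s⁻¹ • (t • (ι ℝ lam * ι ℝ w)) := by rw [h2]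
            _ = ι ℝ lam * ι ℝ ((s⁻¹ * t) • w) := by
                rw [map_smul, mul_smul_comm, smul_smul]
        rw [Lsub, hαval, hβval]
        exact Submodule.sub_mem _
          (Submodule.mem_sup_right (Submodule.smul_mem _ _
            (Submodule.subset_span ⟨(s⁻¹ * t) • w, rfl⟩)))
          (Submodule.mem_sup_left (Submodule.smul_mem _ _ hεE))
end

section
/- Let m ≥ 2 and let a, b be real m×m matrices with aᵀ = −a, bᵀ = b and trace(b) = 0, not both zero. Then the real 2m×2m block matrix [[a, −b], [b, a]] (the image of the skew-Hermitian traceless matrix a + b·i under the standard embedding of su(m) into so(2m)) has rank at least 4. -/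
open Matrix Complex Submodule

section Aux

/-- pointwise coercion `ℝ → ℂ` as an `ℝ`-linear map on function spaces -/
noncomputable def coeRL (k : Type*) : (k → ℝ) →ₗ[ℝ] (k → ℂ) where
  toFun x := fun i => (x i : ℂ)
  map_add' x y := by funext i; simp
  map_smul' r x := by funext i; simp [Complex.ofReal_mul]

lemma mem_span_coe {k : Type*} (u : Set (k → ℝ)) (x : k → ℝ)
    (hx : x ∈ span ℝ u) : coeRL k x ∈ span ℂ (coeRL k '' u) := by
  induction hx using Submodule.span_induction with
  | mem y hy => exact subset_span ⟨y, hy, rfl⟩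
  | zero => simp
  | add y z _ _ hy hz => rw [map_add]; exact Submodule.add_mem _ hy hz
  | smul r y _ hy =>
      rw [_root_.map_smul]
      have : (r : ℝ) • coeRL k y = (r : ℂ) • coeRL k y := by
        funext i; simp [coeRL, Complex.real_smul]
      rw [this]
      exact Submodule.smul_mem _ _ hy

/-- complexification does not increase the rank of a real matrix -/
lemma rank_map_ofReal_le {m₀ n₀ : Type*} [Fintype m₀] [Fintype n₀]
    (A : Matrix m₀ n₀ ℝ) :
    (A.map (fun x : ℝ => (x : ℂ))).rank ≤ A.rank := by
  classical
  obtain ⟨u, hus, hspan, hind⟩ := exists_linearIndependent ℝ (Set.range Aᵀ)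
  have hufin : u.Finite := (Set.finite_range Aᵀ).subset hus
  haveI : Fintype u := hufin.fintype
  haveI : Fintype (coeRL m₀ '' u) := (hufin.image _).fintype
  have hinj : Function.Injective (coeRL m₀) := by
    intro x y hxy
    funext i
    have h2 := congrFun hxy i
    simpa [coeRL] using h2
  have hcols : Set.range (A.map (fun x : ℝ => (x : ℂ)))ᵀ = coeRL m₀ '' Set.range Aᵀ := by
    rw [← Set.range_comp (coeRL m₀) (Aᵀ : n₀ → m₀ → ℝ)]
    rfl
  have hle : span ℂ (Set.range (A.map (fun x : ℝ => (x : ℂ)))ᵀ)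
      ≤ span ℂ (coeRL m₀ '' u) := by
    rw [hcols, Submodule.span_le]
    rintro y ⟨x, hx, rfl⟩
    exact mem_span_coe u x (hspan ▸ subset_span hx)
  calc (A.map (fun x : ℝ => (x : ℂ))).rank
      = Module.finrank ℂ (span ℂ (Set.range (A.map (fun x : ℝ => (x : ℂ)))ᵀ)) :=
        rank_eq_finrank_span_cols _
    _ ≤ Module.finrank ℂ (span ℂ (coeRL m₀ '' u)) := Submodule.finrank_mono hle
    _ ≤ (coeRL m₀ '' u).toFinset.card := finrank_span_le_card _
    _ = u.toFinset.card := by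
        rw [Set.toFinset_image]
        exact Finset.card_image_of_injective _ hinj
    _ = Module.finrank ℝ (span ℝ u) := (finrank_span_set_eq_card hind).symm
    _ = A.rank := by rw [hspan]; exact (rank_eq_finrank_span_cols A).symm

/-- extend by zero on the left summand -/
def inlL (k l : Type*) : (k → ℂ) →ₗ[ℂ] (k ⊕ l → ℂ) where
  toFun v := Sum.elim v 0
  map_add' x y := by funext i; cases i <;> simp
  map_smul' r x := by funext i; cases i <;> simp

/-- extend by zero on the right summand -/
def inrL (k l : Type*) : (l → ℂ) →ₗ[ℂ] (k ⊕ l → ℂ) where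
  toFun v := Sum.elim 0 v
  map_add' x y := by funext i; cases i <;> simp
  map_smul' r x := by funext i; cases i <;> simp

/-- a block diagonal matrix has rank at least the sum of the ranks of the blocks -/
lemma rank_fromBlocks_ge {k : Type*} [Fintype k] [DecidableEq k]
    (z w : Matrix k k ℂ) :
    z.rank + w.rank ≤ (fromBlocks z 0 0 w).rank := by
  classical
  set D : Matrix (k ⊕ k) (k ⊕ k) ℂ := fromBlocks z 0 0 w with hD
  have hinl : Function.Injective (inlL k k) := by
    intro x y h
    funext i
    exact congrFun h (Sum.inl i)
  have hinr : Function.Injective (inrL k k) := by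
    intro x y h
    funext i
    exact congrFun h (Sum.inr i)
  set S₁ := (span ℂ (Set.range zᵀ)).map (inlL k k) with hS₁
  set S₂ := (span ℂ (Set.range wᵀ)).map (inrL k k) with hS₂
  have hcol₁ : S₁ ≤ span ℂ (Set.range Dᵀ) := by
    rw [hS₁, Submodule.map_span, Submodule.span_le]
    rintro y ⟨x, ⟨j, rfl⟩, rfl⟩
    refine subset_span ⟨Sum.inl j, ?_⟩
    funext i
    cases i <;> simp [inlL, hD, fromBlocks, transpose_apply]
  have hcol₂ : S₂ ≤ span ℂ (Set.range Dᵀ) := by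
    rw [hS₂, Submodule.map_span, Submodule.span_le]
    rintro y ⟨x, ⟨j, rfl⟩, rfl⟩
    refine subset_span ⟨Sum.inr j, ?_⟩
    funext i
    cases i <;> simp [inrL, hD, fromBlocks, transpose_apply]
  have hdisj : S₁ ⊓ S₂ = ⊥ := by
    rw [Submodule.eq_bot_iff]
    rintro x ⟨hx₁, hx₂⟩
    obtain ⟨v, -, rfl⟩ := hx₁
    obtain ⟨u, -, he⟩ := hx₂
    funext i
    cases i with
    | inl i =>
        have := congrFun he (Sum.inl i)
        simpa [inlL, inrL] using this.symm
    | inr i => simp [inlL]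
  have hfr₁ : Module.finrank ℂ S₁ = z.rank := by
    rw [hS₁, ← LinearEquiv.finrank_eq (Submodule.equivMapOfInjective _ hinl _)]
    exact (rank_eq_finrank_span_cols z).symm
  have hfr₂ : Module.finrank ℂ S₂ = w.rank := by
    rw [hS₂, ← LinearEquiv.finrank_eq (Submodule.equivMapOfInjective _ hinr _)]
    exact (rank_eq_finrank_span_cols w).symm
  have hsum : Module.finrank ℂ ↥(S₁ ⊔ S₂) = z.rank + w.rank := by
    have := Submodule.finrank_sup_add_finrank_inf_eq S₁ S₂
    rw [hdisj, finrank_bot, add_zero, hfr₁, hfr₂] at this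
    exact this
  calc z.rank + w.rank = Module.finrank ℂ ↥(S₁ ⊔ S₂) := hsum.symm
    _ ≤ Module.finrank ℂ (span ℂ (Set.range Dᵀ)) :=
        Submodule.finrank_mono (sup_le hcol₁ hcol₂)
    _ = D.rank := (rank_eq_finrank_span_cols _).symm

/-- a nonzero Hermitian matrix with trace zero has rank at least 2 -/
lemma herm_rank_two {k : Type*} [Fintype k] [DecidableEq k]
    {A : Matrix k k ℂ} (hA : A.IsHermitian) (h0 : A ≠ 0) (htr : A.trace = 0) :
    2 ≤ A.rank := by
  classical
  have hsum : ∑ i, hA.eigenvalues i = 0 := by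
    have h1 : A.trace = (Matrix.diagonal (RCLike.ofReal ∘ hA.eigenvalues) :
        Matrix k k ℂ).trace := by
      conv_lhs => rw [hA.spectral_theorem]
      rw [Unitary.conjStarAlgAut_apply, Matrix.trace_mul_cycle, Matrix.UnitaryGroup.star_mul_self, Matrix.one_mul]
    rw [htr, Matrix.trace_diagonal] at h1
    have h2 : ((∑ i, hA.eigenvalues i : ℝ) : ℂ) = 0 := by
      push_cast
      exact h1.symm
    exact_mod_cast h2
  rw [hA.rank_eq_card_non_zero_eigs]
  by_contra hlt
  push_neg at hlt
  interval_cases h : Fintype.card {i // hA.eigenvalues i ≠ 0}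
  · have hall : ∀ i, hA.eigenvalues i = 0 := by
      intro i
      by_contra hi
      exact (Fintype.card_eq_zero_iff.mp h).elim ⟨i, hi⟩
    apply h0
    have := hA.spectral_theorem
    have hdiag : (Matrix.diagonal (RCLike.ofReal ∘ hA.eigenvalues) : Matrix k k ℂ) = 0 := by
      have h3 : (RCLike.ofReal ∘ hA.eigenvalues : k → ℂ) = 0 := by
        funext i; simp [hall i]
      rw [h3]; exact Matrix.diagonal_zero
    rw [hdiag, Unitary.conjStarAlgAut_apply, Matrix.mul_zero, Matrix.zero_mul] at this
    exact this
  · obtain ⟨x, hx⟩ := Fintype.card_eq_one_iff.mp h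
    have hothers : ∀ j, j ≠ x.1 → hA.eigenvalues j = 0 := by
      intro j hj
      by_contra hjne
      exact hj (congrArg Subtype.val (hx ⟨j, hjne⟩))
    have : ∑ i, hA.eigenvalues i = hA.eigenvalues x.1 :=
      Finset.sum_eq_single _ (fun j _ hj => hothers j hj) (by simp)
    rw [hsum] at this
    exact x.2 this.symm

/-- a nonzero skew-Hermitian matrix with trace zero has rank at least 2 -/
lemma su_rank_two {k : Type*} [Fintype k] [DecidableEq k]
    {z : Matrix k k ℂ} (hz : zᴴ = -z) (h0 : z ≠ 0) (htr : z.trace = 0) :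
    2 ≤ z.rank := by
  classical
  have hy : (Complex.I • z).IsHermitian := by
    unfold Matrix.IsHermitian
    rw [Matrix.conjTranspose_smul, hz]
    simp [Complex.star_def, Complex.conj_I]
  have hrank : (Complex.I • z).rank = z.rank := by
    have hrw : Complex.I • z = (Complex.I • (1 : Matrix k k ℂ)) * z := by
      rw [Matrix.smul_mul, Matrix.one_mul]
    have hdet : IsUnit (Complex.I • (1 : Matrix k k ℂ)).det := by
      rw [Matrix.det_smul, Matrix.det_one, mul_one]
      exact (IsUnit.pow _ (Ne.isUnit Complex.I_ne_zero))
    rw [hrw, Matrix.rank_mul_eq_right_of_isUnit_det _ _ hdet]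
  have h0' : Complex.I • z ≠ 0 := smul_ne_zero Complex.I_ne_zero h0
  have htr' : (Complex.I • z).trace = 0 := by
    rw [Matrix.trace_smul, htr, smul_zero]
  rw [← hrank]
  exact herm_rank_two hy h0' htr'

end Aux

/-- a nonzero element of the image of `su(m)` in `so(2m)`, i.e. a block
matrix `[[a, −b], [b, a]]` with `aᵀ = −a`, `bᵀ = b`, `tr b = 0`, not both zero, has rank
at least 4. -/
theorem stmt_10 (m : ℕ) (hm : 2 ≤ m)
    (a b : Matrix (Fin m) (Fin m) ℝ)
    (ha : aᵀ = -a) (hb : bᵀ = b) (htr : b.trace = 0)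
    (hne : ¬(a = 0 ∧ b = 0)) :
    4 ≤ (Matrix.fromBlocks a (-b) b a).rank := by
  classical
  set f : ℝ → ℂ := fun x => (x : ℂ) with hf
  set A' : Matrix (Fin m) (Fin m) ℂ := a.map f with hA'
  set B' : Matrix (Fin m) (Fin m) ℂ := b.map f with hB'
  set z : Matrix (Fin m) (Fin m) ℂ := A' - Complex.I • B' with hzdef
  set w : Matrix (Fin m) (Fin m) ℂ := A' + Complex.I • B' with hwdef
  set P : Matrix (Fin m ⊕ Fin m) (Fin m ⊕ Fin m) ℂ :=
    fromBlocks 1 1 (Complex.I • 1) ((-Complex.I) • 1) with hP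
  set Q : Matrix (Fin m ⊕ Fin m) (Fin m ⊕ Fin m) ℂ :=
    fromBlocks ((2:ℂ)⁻¹ • 1) ((-(Complex.I/2)) • 1) ((2:ℂ)⁻¹ • 1) ((Complex.I/2) • 1) with hQ
  -- the complexification of the block matrix
  have hmap : (Matrix.fromBlocks a (-b) b a).map f = fromBlocks A' (-B') B' A' := by
    ext i j
    cases i <;> cases j <;> simp [f, fromBlocks, Matrix.map_apply, hA', hB']
  -- P and Q are mutually inverse
  have hPQ : P * Q = 1 := by
    rw [hP, hQ, fromBlocks_multiply, ← fromBlocks_one, fromBlocks_inj]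
    refine ⟨?_, ?_, ?_, ?_⟩ <;>
    · simp only [Matrix.mul_smul, Matrix.smul_mul, Matrix.mul_one, Matrix.one_mul, smul_smul]
      match_scalars
      all_goals simp [Complex.ext_iff]
      all_goals norm_num
  have hQP : Q * P = 1 := by
    rw [hP, hQ, fromBlocks_multiply, ← fromBlocks_one, fromBlocks_inj]
    refine ⟨?_, ?_, ?_, ?_⟩ <;>
    · simp only [Matrix.mul_smul, Matrix.smul_mul, Matrix.mul_one, Matrix.one_mul, smul_smul]
      match_scalars
      all_goals simp [Complex.ext_iff]
      all_goals norm_num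
  -- the key similarity
  have hkey : fromBlocks A' (-B') B' A' = P * fromBlocks z 0 0 w * Q := by
    rw [hP, hQ, hzdef, hwdef, fromBlocks_multiply, fromBlocks_multiply, fromBlocks_inj]
    refine ⟨?_, ?_, ?_, ?_⟩ <;>
    · simp only [Matrix.mul_smul, Matrix.smul_mul, Matrix.mul_one, Matrix.one_mul,
        Matrix.mul_zero, Matrix.zero_mul, add_zero, zero_add, smul_smul]
      match_scalars <;> simp [Complex.ext_iff] <;> ring
  have hPunit : IsUnit P.det :=
    (Matrix.isUnit_iff_isUnit_det P).mp ⟨⟨P, Q, hPQ, hQP⟩, rfl⟩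
  have hQunit : IsUnit Q.det :=
    (Matrix.isUnit_iff_isUnit_det Q).mp ⟨⟨Q, P, hQP, hPQ⟩, rfl⟩
  -- basic facts about A' and B'
  have haT : ∀ i j, a j i = - a i j := by
    intro i j
    have := congrFun (congrFun ha i) j
    simpa [Matrix.transpose_apply] using this
  have hbT : ∀ i j, b j i = b i j := by
    intro i j
    have := congrFun (congrFun hb i) j
    simpa [Matrix.transpose_apply] using this
  have hAh : A'ᴴ = -A' := by
    ext i j
    simp [hA', Matrix.conjTranspose_apply, Matrix.map_apply, f, Complex.conj_ofReal]
    exact_mod_cast haT i j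
  have hBh : B'ᴴ = B' := by
    ext i j
    simp [hB', Matrix.conjTranspose_apply, Matrix.map_apply, f, Complex.conj_ofReal]
    exact_mod_cast hbT i j
  have htra : a.trace = 0 := by
    have h := congrArg Matrix.trace ha
    rw [Matrix.trace_transpose, Matrix.trace_neg] at h
    linarith
  have htrA : A'.trace = 0 := by
    have : A'.trace = ((a.trace : ℝ) : ℂ) := by
      simp [hA', Matrix.trace, Matrix.diag, Matrix.map_apply, f]
    rw [this, htra]
    simp
  have htrB : B'.trace = 0 := by
    have : B'.trace = ((b.trace : ℝ) : ℂ) := by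
      simp [hB', Matrix.trace, Matrix.diag, Matrix.map_apply, f]
    rw [this, htr]
    simp
  -- z and w are skew-Hermitian, traceless, and nonzero
  have hzskew : zᴴ = -z := by
    rw [hzdef, Matrix.conjTranspose_sub, Matrix.conjTranspose_smul, hAh, hBh]
    simp [Complex.star_def, Complex.conj_I]
    abel
  have hwskew : wᴴ = -w := by
    rw [hwdef, Matrix.conjTranspose_add, Matrix.conjTranspose_smul, hAh, hBh]
    simp [Complex.star_def, Complex.conj_I]
    abel
  have hztr : z.trace = 0 := by
    rw [hzdef, Matrix.trace_sub, Matrix.trace_smul, htrA, htrB]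
    simp
  have hwtr : w.trace = 0 := by
    rw [hwdef, Matrix.trace_add, Matrix.trace_smul, htrA, htrB]
    simp
  have hentry : ∀ (s : ℝ) , ∀ i j, (a i j : ℂ) + (s * Complex.I) * (b i j) = 0 →
      a i j = 0 ∧ s * b i j = 0 := by
    intro s i j hij
    have hre := congrArg Complex.re hij
    have him := congrArg Complex.im hij
    simp [Complex.add_re, Complex.add_im, Complex.mul_re, Complex.mul_im] at hre him
    constructor
    · simpa using hre
    · simpa using him
  have hzne : z ≠ 0 := by
    intro hz0
    apply hne
    have hij : ∀ i j, (a i j : ℂ) + ((-1 : ℝ) * Complex.I) * (b i j) = 0 := by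
      intro i j
      have := congrFun (congrFun hz0 i) j
      simp [hzdef, Matrix.sub_apply, Matrix.smul_apply, hA', hB',
        Matrix.map_apply, f, smul_eq_mul] at this
      push_cast
      linear_combination this
    constructor <;> ext i j
    · exact (hentry (-1) i j (hij i j)).1
    · have := (hentry (-1) i j (hij i j)).2
      simpa using this
  have hwne : w ≠ 0 := by
    intro hw0
    apply hne
    have hij : ∀ i j, (a i j : ℂ) + ((1 : ℝ) * Complex.I) * (b i j) = 0 := by
      intro i j
      have := congrFun (congrFun hw0 i) j
      simp [hwdef, Matrix.add_apply, Matrix.smul_apply, hA', hB',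
        Matrix.map_apply, f, smul_eq_mul] at this
      push_cast
      linear_combination this
    constructor <;> ext i j
    · exact (hentry 1 i j (hij i j)).1
    · have := (hentry 1 i j (hij i j)).2
      simpa using this
  -- assemble
  have h2z : 2 ≤ z.rank := su_rank_two hzskew hzne hztr
  have h2w : 2 ≤ w.rank := su_rank_two hwskew hwne hwtr
  have hchain : (4 : ℕ) ≤ ((Matrix.fromBlocks a (-b) b a).map f).rank := by
    have h1 : z.rank + w.rank ≤ (fromBlocks z 0 0 w).rank := rank_fromBlocks_ge z w
    have h2 : (fromBlocks z 0 0 w).rank = ((Matrix.fromBlocks a (-b) b a).map f).rank := by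
      rw [hmap, hkey, Matrix.rank_mul_eq_left_of_isUnit_det _ _ hQunit,
        Matrix.rank_mul_eq_right_of_isUnit_det _ _ hPunit]
    omega
  have hfinal : ((Matrix.fromBlocks a (-b) b a).map f).rank ≤
      (Matrix.fromBlocks a (-b) b a).rank := rank_map_ofReal_le _
  omega
end

section
/- For every n ≥ 4 there exists a prime linear subspace E ⊆ ⋀²(ℝⁿ) with dim E = ⌊n/2⌋² − 1; consequently MP(n) ≥ ⌊n/2⌋² − 1, where MP(n) is the maximal dimension of a prime subspace of ⋀²(ℝⁿ). -/
open ExteriorAlgebra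

noncomputable section
namespace Stmt11

variable {n : ℕ}

def Fk (k : ℕ) (idx : Fin k → Fin n) : (Fin n → ℝ) [⋀^Fin k]→ₗ[ℝ] ℝ :=
  Matrix.detRowAlternating.compLinearMap (LinearMap.pi fun i => LinearMap.proj (idx i))

def liftk (k : ℕ) (idx : Fin k → Fin n) :
    ExteriorAlgebra ℝ (Fin n → ℝ) →ₗ[ℝ] ℝ :=
  liftAlternating (Function.update (fun i => (0 : (Fin n → ℝ) [⋀^Fin i]→ₗ[ℝ] ℝ)) k (Fk k idx))

lemma detRA {k : ℕ} (M : Matrix (Fin k) (Fin k) ℝ) : Matrix.detRowAlternating M = M.det := rfl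

lemma lift2_mul (p q : Fin n) (x y : Fin n → ℝ) :
    liftk 2 ![p, q] (ι ℝ x * ι ℝ y) = x p * y q - x q * y p := by
  rw [liftk, liftAlternating_ι_mul, liftAlternating_ι]
  simp only [show Nat.succ 1 = 2 from rfl, Function.update_self]
  simp only [Fk, AlternatingMap.curryLeft_apply_apply, AlternatingMap.compLinearMap_apply]
  erw [detRA, Matrix.det_fin_two]
  simp

lemma lift3_mul (p q r : Fin n) (z x y : Fin n → ℝ) :
    liftk 3 ![p, q, r] (ι ℝ z * (ι ℝ x * ι ℝ y)) =
      z p * (x q * y r - x r * y q) - z q * (x p * y r - x r * y p)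
        + z r * (x p * y q - x q * y p) := by
  rw [liftk, liftAlternating_ι_mul, liftAlternating_ι_mul, liftAlternating_ι]
  simp only [show Nat.succ 1 = 2 from rfl, show Nat.succ 2 = 3 from rfl, Function.update_self]
  simp only [Fk, AlternatingMap.curryLeft_apply_apply, AlternatingMap.compLinearMap_apply]
  erw [detRA, Matrix.det_fin_three]
  simp
  ring

lemma iota_anticomm (x y : Fin n → ℝ) : ι ℝ x * ι ℝ y = -(ι ℝ y * ι ℝ x) :=
  eq_neg_of_add_eq_zero_left (ι_add_mul_swap x y)

lemma mul_iota_comm (x y z : Fin n → ℝ) :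
    (ι ℝ x * ι ℝ y) * ι ℝ z = ι ℝ z * (ι ℝ x * ι ℝ y) := by
  rw [mul_assoc, iota_anticomm y z, mul_neg, ← mul_assoc, iota_anticomm x z, neg_mul, neg_neg,
    mul_assoc]

variable {m : ℕ}

def e1 (_h : 2 * m ≤ n) (j : Fin m) : Fin n := ⟨j.1, by have := j.2; omega⟩
def e2 (_h : 2 * m ≤ n) (j : Fin m) : Fin n := ⟨m + j.1, by have := j.2; omega⟩

def uvec (h : 2 * m ≤ n) (j : Fin m) : Fin n → ℝ := Pi.single (e1 h j) 1
def vvec (h : 2 * m ≤ n) (j : Fin m) : Fin n → ℝ := Pi.single (e2 h j) 1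

lemma uvec_e1 (h : 2 * m ≤ n) (j k : Fin m) :
    uvec h j (e1 h k) = if j = k then 1 else 0 := by
  rcases eq_or_ne j k with rfl | hjk
  · simp [uvec]
  · have hne : e1 h k ≠ e1 h j := by
      simp only [e1, ne_eq, Fin.mk.injEq]
      exact fun hh => hjk (Fin.ext hh.symm)
    simp [uvec, Pi.single_apply, hne, hjk]

lemma uvec_e2 (h : 2 * m ≤ n) (j k : Fin m) : uvec h j (e2 h k) = 0 := by
  have := j.2
  simp only [uvec, Pi.single_apply, e1, e2, Fin.mk.injEq]
  rw [if_neg]; omega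

lemma vvec_e1 (h : 2 * m ≤ n) (j k : Fin m) : vvec h j (e1 h k) = 0 := by
  have := k.2
  simp only [vvec, Pi.single_apply, e1, e2, Fin.mk.injEq]
  rw [if_neg]; omega

lemma vvec_e2 (h : 2 * m ≤ n) (j k : Fin m) :
    vvec h j (e2 h k) = if j = k then 1 else 0 := by
  rcases eq_or_ne j k with rfl | hjk
  · simp [vvec]
  · have hne : e2 h k ≠ e2 h j := by
      simp only [e2, ne_eq, Fin.mk.injEq]
      exact fun hh => hjk (Fin.ext (by omega))
    simp [vvec, Pi.single_apply, hne, hjk]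

def tau (h : 2 * m ≤ n) (j k : Fin m) : ExteriorAlgebra ℝ (Fin n → ℝ) :=
  ι ℝ (uvec h j) * ι ℝ (vvec h k) + ι ℝ (uvec h k) * ι ℝ (vvec h j)
    + ι ℝ (uvec h j) * ι ℝ (uvec h k) + ι ℝ (vvec h j) * ι ℝ (vvec h k)

def Phi (h : 2 * m ≤ n) : Matrix (Fin m) (Fin m) ℝ →ₗ[ℝ] ExteriorAlgebra ℝ (Fin n → ℝ) where
  toFun C := ∑ j : Fin m, ∑ k : Fin m, C j k • tau h j k
  map_add' C D := by simp [add_smul, Finset.sum_add_distrib]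
  map_smul' r C := by simp [smul_smul, Finset.smul_sum]

lemma Phi_apply (h : 2 * m ≤ n) (C : Matrix (Fin m) (Fin m) ℝ) :
    Phi h C = ∑ j : Fin m, ∑ k : Fin m, C j k • tau h j k := rfl

lemma lift2_phi_12 (h : 2 * m ≤ n) (C : Matrix (Fin m) (Fin m) ℝ) (j k : Fin m) :
    liftk 2 ![e1 h j, e2 h k] (Phi h C) = C j k + C k j := by
  simp [Phi_apply, tau, lift2_mul, uvec_e1, uvec_e2, vvec_e1, vvec_e2, mul_ite, ite_mul,
    Finset.sum_add_distrib, Finset.sum_ite_eq, Finset.sum_ite_eq']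

lemma lift2_phi_11 (h : 2 * m ≤ n) (C : Matrix (Fin m) (Fin m) ℝ) (j k : Fin m) :
    liftk 2 ![e1 h j, e1 h k] (Phi h C) = C j k - C k j := by
  simp [Phi_apply, tau, lift2_mul, uvec_e1, uvec_e2, vvec_e1, vvec_e2, mul_ite, ite_mul,
    mul_sub, Finset.sum_sub_distrib, Finset.sum_add_distrib, Finset.sum_ite_eq,
    Finset.sum_ite_eq']

lemma lift2_phi_22 (h : 2 * m ≤ n) (C : Matrix (Fin m) (Fin m) ℝ) (j k : Fin m) :
    liftk 2 ![e2 h j, e2 h k] (Phi h C) = C j k - C k j := by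
  simp [Phi_apply, tau, lift2_mul, uvec_e1, uvec_e2, vvec_e1, vvec_e2, mul_ite, ite_mul,
    mul_sub, Finset.sum_sub_distrib, Finset.sum_add_distrib, Finset.sum_ite_eq,
    Finset.sum_ite_eq']

lemma phi_comm (h : 2 * m ≤ n) (C : Matrix (Fin m) (Fin m) ℝ) (μ : Fin n → ℝ) :
    Phi h C * ι ℝ μ = ι ℝ μ * Phi h C := by
  simp only [Phi_apply, Finset.sum_mul, Finset.mul_sum, smul_mul_assoc, mul_smul_comm, tau,
    add_mul, mul_add, mul_iota_comm]

lemma lift3_phi (h : 2 * m ≤ n) (C : Matrix (Fin m) (Fin m) ℝ) (μ : Fin n → ℝ)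
    (p q s : Fin n) :
    liftk 3 ![p, q, s] (ι ℝ μ * Phi h C) =
      μ p * liftk 2 ![q, s] (Phi h C) - μ q * liftk 2 ![p, s] (Phi h C)
        + μ s * liftk 2 ![p, q] (Phi h C) := by
  simp only [Phi_apply, Finset.mul_sum, mul_smul_comm, map_sum, map_smul, smul_eq_mul, tau,
    mul_add, map_add, lift3_mul, lift2_mul, Finset.mul_sum]
  rw [← Finset.sum_sub_distrib, ← Finset.sum_add_distrib]
  refine Finset.sum_congr rfl fun j _ => ?_
  rw [← Finset.sum_sub_distrib, ← Finset.sum_add_distrib]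
  refine Finset.sum_congr rfl fun k _ => ?_
  ring

end Stmt11

namespace Stmt11
variable {n m : ℕ}

lemma phi_prime (h : 2 * m ≤ n) (C : Matrix (Fin m) (Fin m) ℝ)
    (htr : Matrix.trace C = 0) (hC : C ≠ 0) (μ : Fin n → ℝ) (hμ : μ ≠ 0) :
    Phi h C * ι ℝ μ ≠ 0 := by
  intro h0
  have hιμ : ι ℝ μ * Phi h C = 0 := by rw [← phi_comm, h0]
  have h3 : ∀ p q s : Fin n,
      μ p * liftk 2 ![q, s] (Phi h C) - μ q * liftk 2 ![p, s] (Phi h C)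
        + μ s * liftk 2 ![p, q] (Phi h C) = 0 := by
    intro p q s
    rw [← lift3_phi h C μ p q s, hιμ, map_zero]
  obtain ⟨r, hr⟩ : ∃ r, μ r ≠ 0 := by
    by_contra hc; push_neg at hc; exact hμ (funext hc)
  set M : Fin n → Fin n → ℝ := fun p q => liftk 2 ![p, q] (Phi h C) with hMdef
  set φ : Fin n → ℝ := fun t => -(M t r) with hφdef
  have hM : ∀ p q, μ r * M p q = μ p * φ q - μ q * φ p := by
    intro p q
    have h3' := h3 p q r
    simp only [hφdef, hMdef]
    linarith
  set a : Fin m → ℝ := fun j => μ (e1 h j) with ha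
  set b : Fin m → ℝ := fun j => μ (e2 h j) with hb
  set c : Fin m → ℝ := fun j => φ (e1 h j) with hc
  set d : Fin m → ℝ := fun j => φ (e2 h j) with hd
  have R1 : ∀ j k, μ r * (C j k - C k j) = a j * c k - c j * a k := by
    intro j k
    have h' := hM (e1 h j) (e1 h k)
    simp only [hMdef, lift2_phi_11 h C j k] at h'
    linarith
  have R2 : ∀ j k, μ r * (C j k + C k j) = a j * d k - c j * b k := by
    intro j k
    have h' := hM (e1 h j) (e2 h k)
    simp only [hMdef, lift2_phi_12 h C j k] at h'
    linarith
  have R3 : ∀ j k, μ r * (C j k - C k j) = b j * d k - d j * b k := by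
    intro j k
    have h' := hM (e2 h j) (e2 h k)
    simp only [hMdef, lift2_phi_22 h C j k] at h'
    linarith
  set ξ : Fin m → ℂ := fun j => ⟨a j, b j⟩ with hξdef
  set ζ : Fin m → ℂ := fun j => ⟨c j, d j⟩ with hζdef
  have L1 : ∀ j k, ξ j * ζ k = ζ j * ξ k := by
    intro j k
    apply Complex.ext
    · simp only [hξdef, hζdef, Complex.mul_re]
      linarith [R1 j k, R3 j k]
    · simp only [hξdef, hζdef, Complex.mul_im]
      linarith [R2 j k, R2 k j]
  have hCzero : C = 0 := by
    by_cases hξ0 : ∀ j, ξ j = 0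
    · have hab : ∀ j, a j = 0 ∧ b j = 0 := by
        intro j
        have h' := hξ0 j
        rw [Complex.ext_iff] at h'
        exact ⟨h'.1, h'.2⟩
      ext j k
      have h1 := R2 j k
      have h2 := R3 j k
      simp only [(hab j).1, (hab j).2, (hab k).1, (hab k).2, zero_mul, mul_zero, sub_zero,
        zero_sub] at h1 h2
      have hjk : μ r * C j k = 0 := by linarith
      have := (mul_eq_zero.mp hjk).resolve_left hr
      simpa using this
    · push_neg at hξ0
      obtain ⟨p, hp⟩ := hξ0
      set l : ℂ := ζ p / ξ p with hl
      have hζl : ∀ j, ζ j = l * ξ j := by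
        intro j
        rw [hl, div_mul_eq_mul_div, eq_div_iff hp, mul_comm (ζ j) (ξ p), L1 p j, mul_comm]
      have hcj : ∀ j, c j = l.re * a j - l.im * b j := by
        intro j
        have h' := congrArg Complex.re (hζl j)
        simpa [hζdef, hξdef, Complex.mul_re] using h'
      have hdj : ∀ j, d j = l.re * b j + l.im * a j := by
        intro j
        have h' := congrArg Complex.im (hζl j)
        simpa [hζdef, hξdef, Complex.mul_im] using h'
      have hSym : ∀ j k, μ r * (C j k + C k j) = l.im * (a j * a k + b j * b k) := by
        intro j k
        have h' := R2 j k
        rw [hcj j, hdj k] at h'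
        linear_combination h'
      have hAnti : ∀ j k, μ r * (C j k - C k j) = -(l.im) * (a j * b k - b j * a k) := by
        intro j k
        have h' := R1 j k
        rw [hcj j, hcj k] at h'
        linear_combination h'
      have hpos : 0 < ∑ j, (a j ^ 2 + b j ^ 2) := by
        apply Finset.sum_pos' (fun j _ => by positivity)
        refine ⟨p, Finset.mem_univ p, ?_⟩
        have h' : a p ≠ 0 ∨ b p ≠ 0 := by
          by_contra hcon
          push_neg at hcon
          exact hp (by rw [hξdef]; simp [Complex.ext_iff, hcon.1, hcon.2])
        rcases h' with h' | h' <;> positivity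
      have htr' : ∑ j, C j j = 0 := htr
      have hsum : l.im * ∑ j, (a j ^ 2 + b j ^ 2) = 0 := by
        rw [Finset.mul_sum,
          Finset.sum_congr rfl fun j _ => (by linear_combination -(1:ℝ) * hSym j j :
            l.im * (a j ^ 2 + b j ^ 2) = μ r * C j j + μ r * C j j),
          Finset.sum_add_distrib, ← Finset.mul_sum, htr']
        ring
      have him : l.im = 0 := by
        rcases mul_eq_zero.mp hsum with h' | h'
        · exact h'
        · exact absurd h' (ne_of_gt hpos)
      ext j k
      have h1 := hSym j k
      have h2 := hAnti j k
      rw [him] at h1 h2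
      have hjk : μ r * C j k = 0 := by linarith
      have := (mul_eq_zero.mp hjk).resolve_left hr
      simpa using this
  exact hC hCzero


lemma tau_mem (h : 2 * m ≤ n) (j k : Fin m) : tau h j k ∈ ⋀[ℝ]^2 (Fin n → ℝ) := by
  have hmem : ∀ x y : Fin n → ℝ, ι ℝ x * ι ℝ y ∈ ⋀[ℝ]^2 (Fin n → ℝ) := by
    intro x y
    rw [exteriorPower, sq]
    exact Submodule.mul_mem_mul (LinearMap.mem_range_self _ x) (LinearMap.mem_range_self _ y)
  exact Submodule.add_mem _
    (Submodule.add_mem _ (Submodule.add_mem _ (hmem _ _) (hmem _ _)) (hmem _ _)) (hmem _ _)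

lemma phi_mem (h : 2 * m ≤ n) (C : Matrix (Fin m) (Fin m) ℝ) :
    Phi h C ∈ ⋀[ℝ]^2 (Fin n → ℝ) := by
  rw [Phi_apply]
  exact Submodule.sum_mem _ fun j _ => Submodule.sum_mem _ fun k _ =>
    Submodule.smul_mem _ _ (tau_mem h j k)

def psi (h : 2 * m ≤ n) (x : ExteriorAlgebra ℝ (Fin n → ℝ)) : Matrix (Fin m) (Fin m) ℝ :=
  Matrix.of fun j k => (liftk 2 ![e1 h j, e2 h k] x + liftk 2 ![e1 h j, e1 h k] x) / 2

lemma psi_phi (h : 2 * m ≤ n) (C : Matrix (Fin m) (Fin m) ℝ) : psi h (Phi h C) = C := by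
  ext j k
  simp only [psi, Matrix.of_apply, lift2_phi_12, lift2_phi_11]
  ring

lemma phi_inj (h : 2 * m ≤ n) : Function.Injective (Phi h) :=
  Function.LeftInverse.injective (g := psi h) (psi_phi h)

end Stmt11
end

open Stmt11

/-- for every `n ≥ 4` there is a prime subspace of `⋀²(ℝⁿ)` of dimension
`⌊n/2⌋² − 1`; hence `MP(n) ≥ ⌊n/2⌋² − 1`. -/
theorem stmt_11 (n : ℕ) (hn : 4 ≤ n) :
    ∃ E : Submodule ℝ (ExteriorAlgebra ℝ (Fin n → ℝ)),
      E ≤ ⋀[ℝ]^2 (Fin n → ℝ) ∧ IsPrimeSub E ∧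
        Module.finrank ℝ E = (n / 2) ^ 2 - 1 := by
  set m := n / 2 with hm
  have h2m : 2 * m ≤ n := by omega
  have hm1 : 1 ≤ m := by omega
  refine ⟨(LinearMap.ker (Matrix.traceLinearMap (Fin m) ℝ ℝ)).map (Phi h2m), ?_, ?_, ?_⟩
  · rintro x ⟨C, _, rfl⟩
    exact phi_mem h2m C
  · rintro x ⟨C, hCtr, rfl⟩ hx0 μ hμ
    have hC0 : C ≠ 0 := fun hc => hx0 (by rw [hc, map_zero])
    exact phi_prime h2m C hCtr hC0 μ hμ
  · rw [← LinearEquiv.finrank_eq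
      (Submodule.equivMapOfInjective (Phi h2m) (phi_inj h2m) _)]
    have hsurj : Function.Surjective (Matrix.traceLinearMap (Fin m) ℝ ℝ) := by
      intro r
      refine ⟨(r / (m : ℝ)) • 1, ?_⟩
      have hmne : (m : ℝ) ≠ 0 := by positivity
      simp [Matrix.trace_smul, Matrix.trace_one, smul_eq_mul]
      field_simp
    have hrank := LinearMap.finrank_range_add_finrank_ker (Matrix.traceLinearMap (Fin m) ℝ ℝ)
    rw [LinearMap.range_eq_top.mpr hsurj, finrank_top, Module.finrank_self] at hrank
    have hmat : Module.finrank ℝ (Matrix (Fin m) (Fin m) ℝ) = m * m := by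
      rw [Module.finrank_matrix]
      simp
    rw [hmat] at hrank
    have : Module.finrank ℝ (LinearMap.ker (Matrix.traceLinearMap (Fin m) ℝ ℝ)) = m * m - 1 := by
      omega
    rw [this, pow_two]
end

section
/- Let e₁,…,e₇ be the standard basis of ℝ⁷, write e_{ijkl} = eᵢ∧eⱼ∧e_k∧e_l, and let ψ = e_{4567} + e_{2367} + e_{2345} + e_{1357} − e_{1346} − e_{1256} − e_{1247} ∈ ⋀⁴(ℝ⁷) (the Hodge dual ∗φ of the standard G₂ 3-form φ). Then ψ is prime: ψ ∧ λ ≠ 0 for every nonzero λ ∈ ℝ⁷. -/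
set_option maxRecDepth 4000
set_option maxHeartbeats 1000000
set_option synthInstance.maxHeartbeats 1000000

open ExteriorAlgebra

/-- the standard basis of `ℝ⁷` inside the exterior algebra (`e7 0, …, e7 6` correspond
to `e₁, …, e₇`). -/
noncomputable def e7 (i : Fin 7) : ExteriorAlgebra ℝ (Fin 7 → ℝ) :=
  ι ℝ (Pi.single i (1 : ℝ))

/-- the 4-form `ψ = ∗φ = e₄₅₆₇ + e₂₃₆₇ + e₂₃₄₅ + e₁₃₅₇ − e₁₃₄₆ − e₁₂₅₆ − e₁₂₄₇`
on `ℝ⁷` (0-indexed). -/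
noncomputable def g2FourForm : ExteriorAlgebra ℝ (Fin 7 → ℝ) :=
  e7 3 * e7 4 * e7 5 * e7 6 + e7 1 * e7 2 * e7 5 * e7 6 + e7 1 * e7 2 * e7 3 * e7 4 +
    e7 0 * e7 2 * e7 4 * e7 6 - e7 0 * e7 2 * e7 3 * e7 5 - e7 0 * e7 1 * e7 4 * e7 5 -
    e7 0 * e7 1 * e7 3 * e7 6

lemma e7_sq (i : Fin 7) : e7 i * e7 i = 0 := ι_sq_zero _

lemma e7_sq' (i : Fin 7) (x : ExteriorAlgebra ℝ (Fin 7 → ℝ)) : e7 i * (e7 i * x) = 0 := by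
  rw [← mul_assoc, e7_sq, zero_mul]

lemma e7_swap {i j : Fin 7} (_h : i < j) : e7 j * e7 i = -(e7 i * e7 j) :=
  eq_neg_of_add_eq_zero_left (ι_add_mul_swap _ _)

lemma e7_swap' {i j : Fin 7} (h : i < j) (x : ExteriorAlgebra ℝ (Fin 7 → ℝ)) :
    e7 j * (e7 i * x) = -(e7 i * (e7 j * x)) := by
  rw [← mul_assoc, e7_swap h, neg_mul, mul_assoc]

/-- a linear functional on the exterior algebra extracting the top coefficient -/
noncomputable def Fd : ExteriorAlgebra ℝ (Fin 7 → ℝ) →ₗ[ℝ] ℝ :=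
  liftAlternating fun i => match i with
    | 7 => Matrix.detRowAlternating
    | _ => 0

noncomputable def volRows : Fin 7 → (Fin 7 → ℝ) :=
  ![Pi.single 0 1, Pi.single 1 1, Pi.single 2 1, Pi.single 3 1, Pi.single 4 1,
    Pi.single 5 1, Pi.single 6 1]

lemma vol_ne_zero : e7 0 * (e7 1 * (e7 2 * (e7 3 * (e7 4 * (e7 5 * e7 6))))) ≠ 0 := by
  intro hv
  have h2 : ιMulti ℝ 7 volRows =
      e7 0 * (e7 1 * (e7 2 * (e7 3 * (e7 4 * (e7 5 * e7 6))))) := by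
    simp [ιMulti_apply, e7, List.ofFn_succ, volRows]
  have h1 : Fd (ιMulti ℝ 7 volRows) = 1 := by
    rw [Fd, liftAlternating_apply_ιMulti]
    have key : Matrix.detRowAlternating volRows = (Matrix.of volRows).det := by
      rw [Matrix.det]; congr 1
    show Matrix.detRowAlternating volRows = 1
    rw [key]
    have hv2 : volRows = fun i : Fin 7 => (Pi.single i (1:ℝ) : Fin 7 → ℝ) := by
      funext i; fin_cases i <;> rfl
    have h3 : Matrix.of volRows = 1 := by
      rw [hv2]; ext i j
      simp [Matrix.one_apply, Pi.single_apply, eq_comm]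
    rw [h3, Matrix.det_one]
  rw [h2, hv, map_zero] at h1
  exact one_ne_zero h1.symm

/-- the Hodge dual `ψ = ∗φ` of the standard `G₂` 3-form is prime:
`ψ ∧ λ ≠ 0` for every nonzero `λ ∈ ℝ⁷`. -/
theorem stmt_13 : ∀ lam : Fin 7 → ℝ, lam ≠ 0 → g2FourForm * ι ℝ lam ≠ 0 := by
  intro lam hlam h
  have h0 : lam = ∑ i : Fin 7, lam i • (Pi.single i (1:ℝ) : Fin 7 → ℝ) := by
    funext j; rw [Finset.sum_apply]; simp [Pi.single_apply]
  have hι : (ι ℝ) lam = ∑ i : Fin 7, lam i • e7 i := by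
    conv_lhs => rw [h0]
    simp [e7]
  have extract : ∀ j k : Fin 7,
      g2FourForm * (∑ i : Fin 7, lam i • e7 i) * (e7 j * e7 k) = 0 := by
    intro j k; rw [← hι, h, zero_mul]
  apply hlam
  funext m
  show lam m = 0
  fin_cases m
  · have key := extract 1 2
    simp only [g2FourForm, Fin.sum_univ_seven] at key
    simp (config := { decide := true }) only [mul_add, add_mul, sub_mul, mul_sub, smul_mul_assoc,
      mul_smul_comm, mul_assoc, e7_sq, e7_sq', e7_swap, e7_swap', mul_neg, neg_mul, smul_neg,
      neg_neg, add_zero, zero_add, zero_mul, mul_zero, smul_zero, neg_zero, sub_zero, zero_sub,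
      neg_eq_zero, smul_eq_zero, vol_ne_zero, or_false] at key
    exact key
  · have key := extract 0 2
    simp only [g2FourForm, Fin.sum_univ_seven] at key
    simp (config := { decide := true }) only [mul_add, add_mul, sub_mul, mul_sub, smul_mul_assoc,
      mul_smul_comm, mul_assoc, e7_sq, e7_sq', e7_swap, e7_swap', mul_neg, neg_mul, smul_neg,
      neg_neg, add_zero, zero_add, zero_mul, mul_zero, smul_zero, neg_zero, sub_zero, zero_sub,
      neg_eq_zero, smul_eq_zero, vol_ne_zero, or_false] at key
    exact key
  · have key := extract 0 1
    simp only [g2FourForm, Fin.sum_univ_seven] at key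
    simp (config := { decide := true }) only [mul_add, add_mul, sub_mul, mul_sub, smul_mul_assoc,
      mul_smul_comm, mul_assoc, e7_sq, e7_sq', e7_swap, e7_swap', mul_neg, neg_mul, smul_neg,
      neg_neg, add_zero, zero_add, zero_mul, mul_zero, smul_zero, neg_zero, sub_zero, zero_sub,
      neg_eq_zero, smul_eq_zero, vol_ne_zero, or_false] at key
    exact key
  · have key := extract 0 4
    simp only [g2FourForm, Fin.sum_univ_seven] at key
    simp (config := { decide := true }) only [mul_add, add_mul, sub_mul, mul_sub, smul_mul_assoc,
      mul_smul_comm, mul_assoc, e7_sq, e7_sq', e7_swap, e7_swap', mul_neg, neg_mul, smul_neg,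
      neg_neg, add_zero, zero_add, zero_mul, mul_zero, smul_zero, neg_zero, sub_zero, zero_sub,
      neg_eq_zero, smul_eq_zero, vol_ne_zero, or_false] at key
    exact key
  · have key := extract 0 3
    simp only [g2FourForm, Fin.sum_univ_seven] at key
    simp (config := { decide := true }) only [mul_add, add_mul, sub_mul, mul_sub, smul_mul_assoc,
      mul_smul_comm, mul_assoc, e7_sq, e7_sq', e7_swap, e7_swap', mul_neg, neg_mul, smul_neg,
      neg_neg, add_zero, zero_add, zero_mul, mul_zero, smul_zero, neg_zero, sub_zero, zero_sub,
      neg_eq_zero, smul_eq_zero, vol_ne_zero, or_false] at key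
    exact key
  · have key := extract 0 6
    simp only [g2FourForm, Fin.sum_univ_seven] at key
    simp (config := { decide := true }) only [mul_add, add_mul, sub_mul, mul_sub, smul_mul_assoc,
      mul_smul_comm, mul_assoc, e7_sq, e7_sq', e7_swap, e7_swap', mul_neg, neg_mul, smul_neg,
      neg_neg, add_zero, zero_add, zero_mul, mul_zero, smul_zero, neg_zero, sub_zero, zero_sub,
      neg_eq_zero, smul_eq_zero, vol_ne_zero, or_false] at key
    exact key
  · have key := extract 0 5
    simp only [g2FourForm, Fin.sum_univ_seven] at key
    simp (config := { decide := true }) only [mul_add, add_mul, sub_mul, mul_sub, smul_mul_assoc,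
      mul_smul_comm, mul_assoc, e7_sq, e7_sq', e7_swap, e7_swap', mul_neg, neg_mul, smul_neg,
      neg_neg, add_zero, zero_add, zero_mul, mul_zero, smul_zero, neg_zero, sub_zero, zero_sub,
      neg_eq_zero, smul_eq_zero, vol_ne_zero, or_false] at key
    exact key
end

section
/- Let e₁,…,e₈ be the standard basis of ℝ⁸ and write e_{ij} = eᵢ∧eⱼ. Define the seven 2-forms α₁ = e_{12}+e_{34}+e_{56}+e_{78}, α₂ = e_{13}−e_{24}+e_{57}−e_{68}, α₃ = e_{14}+e_{23}−e_{58}−e_{67}, α₄ = e_{15}−e_{26}−e_{37}+e_{48}, α₅ = e_{16}+e_{25}+e_{38}+e_{47}, α₆ = e_{17}−e_{28}+e_{35}−e_{46}, α₇ = e_{18}+e_{27}−e_{36}−e_{45} in ⋀²(ℝ⁸). Then span{α₁,…,α₇} is a prime subspace of ⋀²(ℝ⁸): every nonzero linear combination α of α₁,…,α₇ satisfies α ∧ λ ≠ 0 for every nonzero λ ∈ ℝ⁸. -/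
set_option maxHeartbeats 2000000
set_option synthInstance.maxHeartbeats 400000

open ExteriorAlgebra

/-- the standard basis of `ℝ⁸` inside the exterior algebra (`e8 0, …, e8 7` correspond
to `e₁, …, e₈`). -/
noncomputable def e8 (i : Fin 8) : ExteriorAlgebra ℝ (Fin 8 → ℝ) :=
  ι ℝ (Pi.single i (1 : ℝ))

/-- the seven 2-forms `α₁, …, α₇` spanning `Λ₇² ⊆ ⋀²(ℝ⁸)` (0-indexed). -/
noncomputable def alphaForm : Fin 7 → ExteriorAlgebra ℝ (Fin 8 → ℝ) :=
  ![e8 0 * e8 1 + e8 2 * e8 3 + e8 4 * e8 5 + e8 6 * e8 7,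
    e8 0 * e8 2 - e8 1 * e8 3 + e8 4 * e8 6 - e8 5 * e8 7,
    e8 0 * e8 3 + e8 1 * e8 2 - e8 4 * e8 7 - e8 5 * e8 6,
    e8 0 * e8 4 - e8 1 * e8 5 - e8 2 * e8 6 + e8 3 * e8 7,
    e8 0 * e8 5 + e8 1 * e8 4 + e8 2 * e8 7 + e8 3 * e8 6,
    e8 0 * e8 6 - e8 1 * e8 7 + e8 2 * e8 4 - e8 3 * e8 5,
    e8 0 * e8 7 + e8 1 * e8 6 - e8 2 * e8 5 - e8 3 * e8 4]

/-- the alternating map extracting the `(p,q,r)` coefficient of a 3-form -/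
noncomputable def Aalt (p q r : Fin 8) : (Fin 8 → ℝ) [⋀^Fin 3]→ₗ[ℝ] ℝ :=
  (Matrix.detRowAlternating).compLinearMap (LinearMap.funLeft ℝ ℝ ![p, q, r])

noncomputable def Tfun (p q r : Fin 8) : ExteriorAlgebra ℝ (Fin 8 → ℝ) →ₗ[ℝ] ℝ :=
  liftAlternating (fun i => match i with
    | 3 => Aalt p q r
    | _ => 0)

lemma Tfun_triple (p q r : Fin 8) (x y z : Fin 8 → ℝ) :
    Tfun p q r (ι ℝ x * ι ℝ y * ι ℝ z) = Aalt p q r ![x, y, z] := by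
  rw [Tfun, mul_assoc, liftAlternating_ι_mul, liftAlternating_ι_mul, liftAlternating_ι]
  rfl

def sf (a p : Fin 8) : ℝ := (Pi.single a (1 : ℝ) : Fin 8 → ℝ) p

def Dform (p q r a b : Fin 8) (v : Fin 8 → ℝ) : ℝ :=
  v r * (sf a p * sf b q - sf a q * sf b p)
  - v q * (sf a p * sf b r - sf a r * sf b p)
  + v p * (sf a q * sf b r - sf a r * sf b q)

lemma Dval (p q r a b : Fin 8) (v : Fin 8 → ℝ) :
    Tfun p q r (e8 a * e8 b * ι ℝ v) = Dform p q r a b v := by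
  rw [e8, e8, Tfun_triple]
  show Matrix.det (Matrix.of fun i j =>
      (![Pi.single a 1, Pi.single b 1, v] i) (![p, q, r] j)) = _
  rw [Matrix.det_fin_three]
  simp only [Matrix.of_apply, Matrix.cons_val_zero, Matrix.cons_val_one, Matrix.head_cons,
    Matrix.cons_val_two, Matrix.tail_cons, Dform, sf]
  ring

lemma master (c : Fin 7 → ℝ) (v : Fin 8 → ℝ) (p q r : Fin 8) :
    Tfun p q r ((∑ i, c i • alphaForm i) * ι ℝ v) =
      c 0 * (Dform p q r 0 1 v + Dform p q r 2 3 v + Dform p q r 4 5 v + Dform p q r 6 7 v) +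
        c 1 * (Dform p q r 0 2 v - Dform p q r 1 3 v + Dform p q r 4 6 v - Dform p q r 5 7 v) +
        c 2 * (Dform p q r 0 3 v + Dform p q r 1 2 v - Dform p q r 4 7 v - Dform p q r 5 6 v) +
        c 3 * (Dform p q r 0 4 v - Dform p q r 1 5 v - Dform p q r 2 6 v + Dform p q r 3 7 v) +
        c 4 * (Dform p q r 0 5 v + Dform p q r 1 4 v + Dform p q r 2 7 v + Dform p q r 3 6 v) +
        c 5 * (Dform p q r 0 6 v - Dform p q r 1 7 v + Dform p q r 2 4 v - Dform p q r 3 5 v) +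
        c 6 * (Dform p q r 0 7 v + Dform p q r 1 6 v - Dform p q r 2 5 v - Dform p q r 3 4 v)
    := by
  rw [Fin.sum_univ_seven]
  have a0 : alphaForm 0 = e8 0 * e8 1 + e8 2 * e8 3 + e8 4 * e8 5 + e8 6 * e8 7 := rfl
  have a1 : alphaForm 1 = e8 0 * e8 2 - e8 1 * e8 3 + e8 4 * e8 6 - e8 5 * e8 7 := rfl
  have a2 : alphaForm 2 = e8 0 * e8 3 + e8 1 * e8 2 - e8 4 * e8 7 - e8 5 * e8 6 := rfl
  have a3 : alphaForm 3 = e8 0 * e8 4 - e8 1 * e8 5 - e8 2 * e8 6 + e8 3 * e8 7 := rfl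
  have a4 : alphaForm 4 = e8 0 * e8 5 + e8 1 * e8 4 + e8 2 * e8 7 + e8 3 * e8 6 := rfl
  have a5 : alphaForm 5 = e8 0 * e8 6 - e8 1 * e8 7 + e8 2 * e8 4 - e8 3 * e8 5 := rfl
  have a6 : alphaForm 6 = e8 0 * e8 7 + e8 1 * e8 6 - e8 2 * e8 5 - e8 3 * e8 4 := rfl
  rw [a0, a1, a2, a3, a4, a5, a6]
  simp only [add_mul, sub_mul, smul_mul_assoc, map_add, map_sub, map_smul, smul_eq_mul, Dval]

/-- `Λ₇² = span{α₁,…,α₇}` is a prime subspace of `⋀²(ℝ⁸)`. -/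
theorem stmt_15 :
    ∀ α ∈ Submodule.span ℝ (Set.range alphaForm), α ≠ 0 →
      ∀ lam : Fin 8 → ℝ, lam ≠ 0 → α * ι ℝ lam ≠ 0 := by
  intro α hα hne lam hlam hmul
  obtain ⟨c, hc⟩ := (Submodule.mem_span_range_iff_exists_fun ℝ).mp hα
  obtain ⟨i0, hi0⟩ : ∃ i, c i ≠ 0 := by
    by_contra hall
    push_neg at hall
    apply hne
    rw [← hc]
    simp [hall]
  obtain ⟨j0, hj0⟩ : ∃ j, lam j ≠ 0 := by
    by_contra hall
    push_neg at hall
    exact hlam (funext hall)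
  have h0 : ∀ p q r : Fin 8, Tfun p q r ((∑ i, c i • alphaForm i) * ι ℝ lam) = 0 := by
    intro p q r
    rw [hc, hmul, map_zero]
  have hM : ∀ p q r : Fin 8,
      c 0 * (Dform p q r 0 1 lam + Dform p q r 2 3 lam + Dform p q r 4 5 lam + Dform p q r 6 7 lam) +
        c 1 * (Dform p q r 0 2 lam - Dform p q r 1 3 lam + Dform p q r 4 6 lam - Dform p q r 5 7 lam) +
        c 2 * (Dform p q r 0 3 lam + Dform p q r 1 2 lam - Dform p q r 4 7 lam - Dform p q r 5 6 lam) +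
        c 3 * (Dform p q r 0 4 lam - Dform p q r 1 5 lam - Dform p q r 2 6 lam + Dform p q r 3 7 lam) +
        c 4 * (Dform p q r 0 5 lam + Dform p q r 1 4 lam + Dform p q r 2 7 lam + Dform p q r 3 6 lam) +
        c 5 * (Dform p q r 0 6 lam - Dform p q r 1 7 lam + Dform p q r 2 4 lam - Dform p q r 3 5 lam) +
        c 6 * (Dform p q r 0 7 lam + Dform p q r 1 6 lam - Dform p q r 2 5 lam - Dform p q r 3 4 lam) = 0 := by
    intro p q r
    rw [← master]
    exact h0 p q r
  have t0 := hM 0 1 2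
  have t1 := hM 0 1 3
  have t2 := hM 0 1 4
  have t3 := hM 0 1 5
  have t4 := hM 0 1 6
  have t5 := hM 0 1 7
  have t6 := hM 0 2 3
  have t7 := hM 0 2 4
  have t8 := hM 0 2 5
  have t9 := hM 0 2 6
  have t10 := hM 0 2 7
  have t11 := hM 0 3 4
  have t12 := hM 0 3 5
  have t13 := hM 0 3 6
  have t14 := hM 0 3 7
  have t15 := hM 0 4 5
  have t16 := hM 0 4 6
  have t17 := hM 0 4 7
  have t18 := hM 0 5 6
  have t19 := hM 0 5 7
  have t20 := hM 0 6 7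
  have t21 := hM 1 2 3
  have t22 := hM 1 2 4
  have t23 := hM 1 2 5
  have t24 := hM 1 2 6
  have t25 := hM 1 2 7
  have t26 := hM 1 3 4
  have t27 := hM 1 3 5
  have t28 := hM 1 3 6
  have t29 := hM 1 3 7
  have t30 := hM 1 4 5
  have t31 := hM 1 4 6
  have t32 := hM 1 4 7
  have t33 := hM 1 5 6
  have t34 := hM 1 5 7
  have t35 := hM 1 6 7
  have t36 := hM 2 3 4
  have t37 := hM 2 3 5
  have t38 := hM 2 3 6
  have t39 := hM 2 3 7
  have t40 := hM 2 4 5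
  have t41 := hM 2 4 6
  have t42 := hM 2 4 7
  have t43 := hM 2 5 6
  have t44 := hM 2 5 7
  have t45 := hM 2 6 7
  have t46 := hM 3 4 5
  have t47 := hM 3 4 6
  have t48 := hM 3 4 7
  have t49 := hM 3 5 6
  have t50 := hM 3 5 7
  have t51 := hM 3 6 7
  have t52 := hM 4 5 6
  have t53 := hM 4 5 7
  have t54 := hM 4 6 7
  have t55 := hM 5 6 7
  simp (config := { decide := true }) only [Dform, sf, Pi.single_apply,
    if_true, if_false, mul_zero, zero_mul, mul_one, one_mul, add_zero, zero_add,
    sub_zero, zero_sub, neg_zero] at t0 t1 t2 t3 t4 t5 t6 t7 t8 t9 t10 t11 t12 t13 t14 t15 t16 t17 t18 t19 t20 t21 t22 t23 t24 t25 t26 t27 t28 t29 t30 t31 t32 t33 t34 t35 t36 t37 t38 t39 t40 t41 t42 t43 t44 t45 t46 t47 t48 t49 t50 t51 t52 t53 t54 t55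
  have key : (c 0 ^ 2 + c 1 ^ 2 + c 2 ^ 2 + c 3 ^ 2 + c 4 ^ 2 + c 5 ^ 2 + c 6 ^ 2) *
      (lam 0 ^ 2 + lam 1 ^ 2 + lam 2 ^ 2 + lam 3 ^ 2 + lam 4 ^ 2 + lam 5 ^ 2 + lam 6 ^ 2 +
        lam 7 ^ 2) = 0 := by
    linear_combination (1/3 : ℝ) * (c 0 * lam 2 - c 1 * lam 1 + c 2 * lam 0) * t0 +
        (1/3 : ℝ) * (c 0 * lam 3 - c 1 * lam 0 - c 2 * lam 1) * t1 +
        (1/3 : ℝ) * (c 0 * lam 4 - c 3 * lam 1 + c 4 * lam 0) * t2 +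
        (1/3 : ℝ) * (c 0 * lam 5 - c 3 * lam 0 - c 4 * lam 1) * t3 +
        (1/3 : ℝ) * (c 0 * lam 6 - c 5 * lam 1 + c 6 * lam 0) * t4 +
        (1/3 : ℝ) * (c 0 * lam 7 - c 5 * lam 0 - c 6 * lam 1) * t5 +
        (1/3 : ℝ) * (c 0 * lam 0 + c 1 * lam 3 - c 2 * lam 2) * t6 +
        (1/3 : ℝ) * (c 1 * lam 4 - c 3 * lam 2 + c 5 * lam 0) * t7 +
        (1/3 : ℝ) * (c 1 * lam 5 - c 4 * lam 2 - c 6 * lam 0) * t8 +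
        (1/3 : ℝ) * (c 1 * lam 6 - c 3 * lam 0 - c 5 * lam 2) * t9 +
        (1/3 : ℝ) * (c 1 * lam 7 + c 4 * lam 0 - c 6 * lam 2) * t10 +
        (1/3 : ℝ) * (c 2 * lam 4 - c 3 * lam 3 - c 6 * lam 0) * t11 +
        (1/3 : ℝ) * (c 2 * lam 5 - c 4 * lam 3 - c 5 * lam 0) * t12 +
        (1/3 : ℝ) * (c 2 * lam 6 + c 4 * lam 0 - c 5 * lam 3) * t13 +
        (1/3 : ℝ) * (c 2 * lam 7 + c 3 * lam 0 - c 6 * lam 3) * t14 +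
        (1/3 : ℝ) * (c 0 * lam 0 + c 3 * lam 5 - c 4 * lam 4) * t15 +
        (1/3 : ℝ) * (c 1 * lam 0 + c 3 * lam 6 - c 5 * lam 4) * t16 +
        (1/3 : ℝ) * (- c 2 * lam 0 + c 3 * lam 7 - c 6 * lam 4) * t17 +
        (1/3 : ℝ) * (- c 2 * lam 0 + c 4 * lam 6 - c 5 * lam 5) * t18 +
        (1/3 : ℝ) * (- c 1 * lam 0 + c 4 * lam 7 - c 6 * lam 5) * t19 +
        (1/3 : ℝ) * (c 0 * lam 0 + c 5 * lam 7 - c 6 * lam 6) * t20 +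
        (1/3 : ℝ) * (c 0 * lam 1 + c 1 * lam 2 + c 2 * lam 3) * t21 +
        (1/3 : ℝ) * (c 2 * lam 4 - c 4 * lam 2 + c 5 * lam 1) * t22 +
        (1/3 : ℝ) * (c 2 * lam 5 + c 3 * lam 2 - c 6 * lam 1) * t23 +
        (1/3 : ℝ) * (c 2 * lam 6 - c 3 * lam 1 - c 6 * lam 2) * t24 +
        (1/3 : ℝ) * (c 2 * lam 7 + c 4 * lam 1 + c 5 * lam 2) * t25 +
        (1/3 : ℝ) * (- c 1 * lam 4 - c 4 * lam 3 - c 6 * lam 1) * t26 +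
        (1/3 : ℝ) * (- c 1 * lam 5 + c 3 * lam 3 - c 5 * lam 1) * t27 +
        (1/3 : ℝ) * (- c 1 * lam 6 + c 4 * lam 1 - c 6 * lam 3) * t28 +
        (1/3 : ℝ) * (- c 1 * lam 7 + c 3 * lam 1 + c 5 * lam 3) * t29 +
        (1/3 : ℝ) * (c 0 * lam 1 + c 3 * lam 4 + c 4 * lam 5) * t30 +
        (1/3 : ℝ) * (c 1 * lam 1 + c 4 * lam 6 - c 6 * lam 4) * t31 +
        (1/3 : ℝ) * (- c 2 * lam 1 + c 4 * lam 7 + c 5 * lam 4) * t32 +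
        (1/3 : ℝ) * (- c 2 * lam 1 - c 3 * lam 6 - c 6 * lam 5) * t33 +
        (1/3 : ℝ) * (- c 1 * lam 1 - c 3 * lam 7 + c 5 * lam 5) * t34 +
        (1/3 : ℝ) * (c 0 * lam 1 + c 5 * lam 6 + c 6 * lam 7) * t35 +
        (1/3 : ℝ) * (c 0 * lam 4 - c 5 * lam 3 - c 6 * lam 2) * t36 +
        (1/3 : ℝ) * (c 0 * lam 5 - c 5 * lam 2 + c 6 * lam 3) * t37 +
        (1/3 : ℝ) * (c 0 * lam 6 + c 3 * lam 3 + c 4 * lam 2) * t38 +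
        (1/3 : ℝ) * (c 0 * lam 7 + c 3 * lam 2 - c 4 * lam 3) * t39 +
        (1/3 : ℝ) * (c 0 * lam 2 + c 5 * lam 5 + c 6 * lam 4) * t40 +
        (1/3 : ℝ) * (c 1 * lam 2 + c 3 * lam 4 + c 5 * lam 6) * t41 +
        (1/3 : ℝ) * (- c 2 * lam 2 - c 4 * lam 4 + c 5 * lam 7) * t42 +
        (1/3 : ℝ) * (- c 2 * lam 2 + c 3 * lam 5 - c 6 * lam 6) * t43 +
        (1/3 : ℝ) * (- c 1 * lam 2 - c 4 * lam 5 - c 6 * lam 7) * t44 +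
        (1/3 : ℝ) * (c 0 * lam 2 - c 3 * lam 7 - c 4 * lam 6) * t45 +
        (1/3 : ℝ) * (c 0 * lam 3 + c 5 * lam 4 - c 6 * lam 5) * t46 +
        (1/3 : ℝ) * (c 1 * lam 3 - c 4 * lam 4 - c 6 * lam 6) * t47 +
        (1/3 : ℝ) * (- c 2 * lam 3 - c 3 * lam 4 - c 6 * lam 7) * t48 +
        (1/3 : ℝ) * (- c 2 * lam 3 - c 4 * lam 5 - c 5 * lam 6) * t49 +
        (1/3 : ℝ) * (- c 1 * lam 3 - c 3 * lam 5 - c 5 * lam 7) * t50 +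
        (1/3 : ℝ) * (c 0 * lam 3 - c 3 * lam 6 + c 4 * lam 7) * t51 +
        (1/3 : ℝ) * (c 0 * lam 6 - c 1 * lam 5 - c 2 * lam 4) * t52 +
        (1/3 : ℝ) * (c 0 * lam 7 - c 1 * lam 4 + c 2 * lam 5) * t53 +
        (1/3 : ℝ) * (c 0 * lam 4 + c 1 * lam 7 + c 2 * lam 6) * t54 +
        (1/3 : ℝ) * (c 0 * lam 5 + c 1 * lam 6 - c 2 * lam 7) * t55
  rcases mul_eq_zero.mp key with hC | hL
  · refine hi0 (pow_eq_zero_iff (two_ne_zero) |>.mp (le_antisymm ?_ (sq_nonneg _)))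
    calc c i0 ^ 2 ≤ ∑ i, c i ^ 2 :=
          Finset.single_le_sum (fun i _ => sq_nonneg (c i)) (Finset.mem_univ i0)
      _ = 0 := by rw [Fin.sum_univ_seven]; linarith
  · refine hj0 (pow_eq_zero_iff (two_ne_zero) |>.mp (le_antisymm ?_ (sq_nonneg _)))
    calc lam j0 ^ 2 ≤ ∑ j, lam j ^ 2 :=
          Finset.single_le_sum (fun j _ => sq_nonneg (lam j)) (Finset.mem_univ j0)
      _ = 0 := by rw [Fin.sum_univ_eight]; linarith
end
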